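/- The function F: (0,∞)ⁿ → [0,1] defined by F(x₁,…,xₙ) = L(Σₖ σₖ/xₖ), where L is the Laplace transform of a nonnegative random variable J with P(J > 0) > 0 and σₖ > 0, is a valid multivariate distribution function: it equals the joint CDF of the random vector (J Y₁, …, J Yₙ) for Y₁,…,Yₙ independent 1-Fréchet(σₖ) independent of J. In particular F is non-decreasing in each coordinate and F(x) → 1 as all xₖ → ∞. -/

import Mathlib

open MeasureTheory ProbabilityTheory Filter

/-- `Y` is a 1-Fréchet random variable with scale parameter `σ`. -/
def IsFrechet {Ω : Type*} [MeasurableSpace Ω] (μ : Measure Ω) (Y : Ω → ℝ) (σ : ℝ) : Prop :=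
  (∀ x : ℝ, 0 < x → μ {ω | Y ω ≤ x} = ENNReal.ofReal (Real.exp (-σ / x))) ∧
  (∀ x : ℝ, x ≤ 0 → μ {ω | Y ω ≤ x} = 0)

open Topology

/-!
Conditionally on `J = j`, the events `{j Yₖ ≤ xₖ}` are independent with probabilities
`exp (-j σₖ / xₖ)`, so their intersection has probability `exp (-j ∑ₖ σₖ / xₖ)`; integrating
over the law of `J` gives `L (∑ₖ σₖ / xₖ)`. Monotonicity and the limit at infinity follow because
`t ↦ L t` is non-increasing on `[0, ∞)` and, by dominated convergence, tends to `L 0 = 1` as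
`t ↓ 0`.
-/

lemma Real.exp_neg_mul_le_one {t j : ℝ} (ht : 0 ≤ t) (hj : 0 ≤ j) : Real.exp (-t * j) ≤ 1 := by
  rw [Real.exp_le_one_iff, neg_mul, neg_nonpos]
  exact mul_nonneg ht hj

section LaplaceTransform

variable {Ω : Type*} [MeasurableSpace Ω] {μ : Measure Ω} [IsFiniteMeasure μ] {J : Ω → ℝ}

lemma integrable_exp_neg_mul (hJ : Measurable J) (hJnn : ∀ ω, 0 ≤ J ω) {t : ℝ} (ht : 0 ≤ t) :
    Integrable (fun ω => Real.exp (-t * J ω)) μ := by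
  refine (integrable_const (1 : ℝ)).mono' (hJ.const_mul (-t)).exp.aestronglyMeasurable ?_
  filter_upwards with ω
  rw [Real.norm_of_nonneg (Real.exp_pos _).le]
  exact Real.exp_neg_mul_le_one ht (hJnn ω)

lemma antitoneOn_integral_exp_neg_mul (hJ : Measurable J) (hJnn : ∀ ω, 0 ≤ J ω) :
    AntitoneOn (fun t => ∫ ω, Real.exp (-t * J ω) ∂μ) (Set.Ici 0) :=
  fun t₁ ht₁ t₂ ht₂ ht => integral_mono (integrable_exp_neg_mul hJ hJnn ht₂)
    (integrable_exp_neg_mul hJ hJnn ht₁) fun ω => Real.exp_le_exp.2 (by nlinarith [hJnn ω])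

lemma tendsto_integral_exp_neg_mul_nhdsGE_zero (hJ : Measurable J) (hJnn : ∀ ω, 0 ≤ J ω) :
    Tendsto (fun t => ∫ ω, Real.exp (-t * J ω) ∂μ) (𝓝[≥] (0 : ℝ)) (𝓝 (μ.real Set.univ)) := by
  have h_lim (ω : Ω) : Tendsto (fun t => Real.exp (-t * J ω)) (𝓝[≥] (0 : ℝ)) (𝓝 1) := by
    simpa using ((continuous_neg.mul continuous_const).rexp.tendsto (0 : ℝ)).mono_left
      nhdsWithin_le_nhds
  have h_bound : ∀ᶠ t in 𝓝[≥] (0 : ℝ), ∀ᵐ ω ∂μ, ‖Real.exp (-t * J ω)‖ ≤ 1 :=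
    eventually_nhdsWithin_of_forall fun t ht => Eventually.of_forall fun ω => by
      rw [Real.norm_of_nonneg (Real.exp_pos _).le]
      exact Real.exp_neg_mul_le_one ht (hJnn ω)
  simpa using tendsto_integral_filter_of_dominated_convergence (fun _ => 1)
    (Eventually.of_forall fun t => (hJ.const_mul (-t)).exp.aestronglyMeasurable) h_bound
    (integrable_const 1) (Eventually.of_forall h_lim)

end LaplaceTransform

lemma tendsto_sum_div_atTop_nhdsGE_zero {ι : Type*} [Fintype ι] {σ : ι → ℝ} (hσ : ∀ k, 0 ≤ σ k) :
    Tendsto (fun x : ι → ℝ => ∑ k, σ k / x k) atTop (𝓝[≥] 0) := by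
  refine tendsto_nhdsWithin_iff.2 ⟨?_, ?_⟩
  · have h_coord (k : ι) : Tendsto (fun x : ι → ℝ => x k) atTop atTop :=
      tendsto_atTop_atTop_of_monotone (fun _ _ h => h k) fun b => ⟨fun _ => b, le_rfl⟩
    simpa using tendsto_finsetSum Finset.univ fun k _ => tendsto_const_nhds.div_atTop (h_coord k)
  · filter_upwards [eventually_ge_atTop 0] with x hx
    exact Finset.sum_nonneg fun k _ => div_nonneg (hσ k) (hx k)

namespace ProbabilityTheory

variable {Ω : Type*} [MeasurableSpace Ω] {μ : Measure Ω}

lemma IndepFun.measure_preimage_prodMk [IsFiniteMeasure μ] {α β : Type*} [MeasurableSpace α]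
    [MeasurableSpace β] {X : Ω → α} {V : Ω → β} (h : IndepFun X V μ) (hX : Measurable X)
    (hV : Measurable V) {S : Set (α × β)} (hS : MeasurableSet S) :
    μ ((fun ω => (X ω, V ω)) ⁻¹' S) = ∫⁻ ω, μ (V ⁻¹' (Prod.mk (X ω) ⁻¹' S)) ∂μ := by
  rw [← Measure.map_apply (hX.prodMk hV) hS,
    (indepFun_iff_map_prod_eq_prod_map_map hX.aemeasurable hV.aemeasurable).1 h,
    Measure.prod_apply hS, lintegral_map (measurable_measure_prodMk_left hS) hX]
  exact lintegral_congr fun ω => Measure.map_apply hV (measurable_prodMk_left hS)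

lemma iIndepFun.indepFun_option_elim {ι β : Type*} [Fintype ι] [MeasurableSpace β] {X : Ω → β}
    {Y : ι → Ω → β} (h : iIndepFun (fun i : Option ι => i.elim X Y) μ) (hX : Measurable X)
    (hY : ∀ i, Measurable (Y i)) : IndepFun X (fun ω i => Y i ω) μ := by
  have h_meas : ∀ i : Option ι, Measurable (i.elim X Y) := by
    rintro (_ | i)
    exacts [hX, hY i]
  have h_disj :
      Disjoint ({none} : Finset (Option ι)) (Finset.univ.map Function.Embedding.some) := by
    simp
  exact (h.indepFun_finset _ _ h_disj h_meas).comp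
    (φ := fun p => p ⟨none, Finset.mem_singleton_self _⟩) (ψ := fun p i => p ⟨some i, by simp⟩)
    (_mγ := ‹_›) (_mγ' := MeasurableSpace.pi)
    (measurable_pi_apply _) (measurable_pi_lambda _ fun _ => measurable_pi_apply _)

variable {ι : Type*} [Fintype ι] {Y : ι → Ω → ℝ} {σ : ι → ℝ} {x : ι → ℝ}

lemma iIndepFun.measure_forall_le_of_isFrechet (h : iIndepFun Y μ)
    (hY : ∀ k, IsFrechet μ (Y k) (σ k)) (hx : ∀ k, 0 < x k) :
    μ {ω | ∀ k, Y k ω ≤ x k} = ENNReal.ofReal (Real.exp (-∑ k, σ k / x k)) := by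
  have h_inter : {ω | ∀ k, Y k ω ≤ x k} = ⋂ k, Y k ⁻¹' Set.Iic (x k) := by
    ext ω
    simp
  rw [h_inter, h.meas_iInter fun k => ⟨Set.Iic (x k), measurableSet_Iic, rfl⟩,
    ← Finset.sum_neg_distrib, Real.exp_sum,
    ENNReal.ofReal_prod_of_nonneg fun k _ => (Real.exp_pos _).le]
  exact Finset.prod_congr rfl fun k _ => by rw [← neg_div]; exact (hY k).1 (x k) (hx k)

lemma iIndepFun.measure_forall_mul_le_of_isFrechet [IsProbabilityMeasure μ] (h : iIndepFun Y μ)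
    (hY : ∀ k, IsFrechet μ (Y k) (σ k)) (hx : ∀ k, 0 < x k) {j : ℝ} (hj : 0 ≤ j) :
    μ {ω | ∀ k, j * Y k ω ≤ x k} = ENNReal.ofReal (Real.exp (-(∑ k, σ k / x k) * j)) := by
  rcases hj.eq_or_lt with rfl | hj
  · simp [fun k => (hx k).le]
  have h_div : {ω | ∀ k, j * Y k ω ≤ x k} = {ω | ∀ k, Y k ω ≤ x k / j} := by
    simp only [le_div_iff₀ hj, mul_comm j]
  have h_sum : ∑ k, σ k / (x k / j) = (∑ k, σ k / x k) * j := by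
    rw [Finset.sum_mul]
    exact Finset.sum_congr rfl fun k _ => by field_simp
  rw [h_div, h.measure_forall_le_of_isFrechet hY fun k => div_pos (hx k) hj, h_sum, neg_mul]

lemma measure_forall_mul_le_of_isFrechet [IsProbabilityMeasure μ] {J : Ω → ℝ}
    (hJ : Measurable J) (hJnn : ∀ ω, 0 ≤ J ω) (hYmeas : ∀ k, Measurable (Y k))
    (hJY : IndepFun J (fun ω k => Y k ω) μ) (h : iIndepFun Y μ) (hσ : ∀ k, 0 ≤ σ k)
    (hY : ∀ k, IsFrechet μ (Y k) (σ k)) (hx : ∀ k, 0 < x k) :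
    μ {ω | ∀ k, J ω * Y k ω ≤ x k} =
      ENNReal.ofReal (∫ ω, Real.exp (-(∑ k, σ k / x k) * J ω) ∂μ) := by
  have hs : 0 ≤ ∑ k, σ k / x k := Finset.sum_nonneg fun k _ => div_nonneg (hσ k) (hx k).le
  have hS : MeasurableSet {p : ℝ × (ι → ℝ) | ∀ k, p.1 * p.2 k ≤ x k} := by
    simp only [Set.ofPred_forall]
    exact MeasurableSet.iInter fun k => measurableSet_le (by fun_prop) measurable_const
  rw [ofReal_integral_eq_lintegral_ofReal (integrable_exp_neg_mul hJ hJnn hs)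
      (Eventually.of_forall fun ω => (Real.exp_pos _).le)]
  exact (hJY.measure_preimage_prodMk hJ (measurable_pi_lambda _ hYmeas) hS).trans
    (lintegral_congr fun ω => h.measure_forall_mul_le_of_isFrechet hY hx (hJnn ω))

end ProbabilityTheory

theorem stmt18_general {Ω : Type*} [MeasurableSpace Ω] (μ : Measure Ω) [IsProbabilityMeasure μ]
    (n : ℕ) (J : Ω → ℝ) (hJmeas : Measurable J) (hJnn : ∀ ω, 0 ≤ J ω)
    (L : ℝ → ℝ) (hL : ∀ t : ℝ, L t = ∫ ω, Real.exp (-t * J ω) ∂μ)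
    (σ : Fin n → ℝ) (hσ : ∀ k, 0 < σ k)
    (Y : Fin n → Ω → ℝ) (hYmeas : ∀ k, Measurable (Y k))
    (hY : ∀ k, IsFrechet μ (Y k) (σ k))
    (hindep : iIndepFun
      (fun i : Option (Fin n) => i.elim J Y) μ) :
    -- `F(x) = L(∑ₖ σₖ/xₖ)` is the joint CDF of `(J Y₁, …, J Yₙ)`,
    (∀ x : Fin n → ℝ, (∀ k, 0 < x k) →
      μ {ω | ∀ k, J ω * Y k ω ≤ x k} = ENNReal.ofReal (L (∑ k, σ k / x k))) ∧
    -- it is non-decreasing in each coordinate on the positive orthant,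
    (∀ x y : Fin n → ℝ, (∀ k, 0 < x k) → x ≤ y →
      L (∑ k, σ k / x k) ≤ L (∑ k, σ k / y k)) ∧
    -- and `F(x) → 1` as all coordinates `xₖ → ∞`
    Tendsto (fun x : Fin n → ℝ => L (∑ k, σ k / x k)) atTop (nhds 1) := by
  obtain rfl : L = fun t => ∫ ω, Real.exp (-t * J ω) ∂μ := funext hL
  have hσ' : ∀ k, 0 ≤ σ k := fun k => (hσ k).le
  have h_sum_nonneg (x : Fin n → ℝ) (hx : ∀ k, 0 < x k) : 0 ≤ ∑ k, σ k / x k :=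
    Finset.sum_nonneg fun k _ => div_nonneg (hσ' k) (hx k).le
  refine ⟨fun x hx => ?_, fun x y hx hxy => ?_, ?_⟩
  · exact measure_forall_mul_le_of_isFrechet hJmeas hJnn hYmeas
      (hindep.indepFun_option_elim hJmeas hYmeas)
      (hindep.precomp (g := some) (Option.some_injective _)) hσ' hY hx
  · have hy : ∀ k, 0 < y k := fun k => (hx k).trans_le (hxy k)
    exact antitoneOn_integral_exp_neg_mul hJmeas hJnn (h_sum_nonneg y hy) (h_sum_nonneg x hx)
      (Finset.sum_le_sum fun k _ => div_le_div_of_nonneg_left (hσ' k) (hx k) (hxy k))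
  · simpa [Function.comp_def] using
      (tendsto_integral_exp_neg_mul_nhdsGE_zero (μ := μ) hJmeas hJnn).comp
        (tendsto_sum_div_atTop_nhdsGE_zero hσ')

theorem stmt18 {Ω : Type*} [MeasurableSpace Ω] (μ : Measure Ω) [IsProbabilityMeasure μ]
    (n : ℕ) (J : Ω → ℝ) (hJmeas : Measurable J) (hJnn : ∀ ω, 0 ≤ J ω)
    (hJpos : 0 < μ {ω | 0 < J ω})
    (L : ℝ → ℝ) (hL : ∀ t : ℝ, L t = ∫ ω, Real.exp (-t * J ω) ∂μ)
    (σ : Fin n → ℝ) (hσ : ∀ k, 0 < σ k)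
    (Y : Fin n → Ω → ℝ) (hYmeas : ∀ k, Measurable (Y k))
    (hY : ∀ k, IsFrechet μ (Y k) (σ k))
    (hindep : iIndepFun
      (fun i : Option (Fin n) => i.elim J Y) μ) :
    -- `F(x) = L(∑ₖ σₖ/xₖ)` is the joint CDF of `(J Y₁, …, J Yₙ)`,
    (∀ x : Fin n → ℝ, (∀ k, 0 < x k) →
      μ {ω | ∀ k, J ω * Y k ω ≤ x k} = ENNReal.ofReal (L (∑ k, σ k / x k))) ∧
    -- it is non-decreasing in each coordinate on the positive orthant,
    (∀ x y : Fin n → ℝ, (∀ k, 0 < x k) → x ≤ y →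
      L (∑ k, σ k / x k) ≤ L (∑ k, σ k / y k)) ∧
    -- and `F(x) → 1` as all coordinates `xₖ → ∞`
    Tendsto (fun x : Fin n → ℝ => L (∑ k, σ k / x k)) atTop (nhds 1) :=
  stmt18_general μ n J hJmeas hJnn L hL σ hσ Y hYmeas hY hindep
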